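/- For a, b ∈ ℂ not both zero, the 6-dimensional Lie algebra d_5^{a,b} has nontrivial center if and only if a + 2b = 0 or 2a + b = 0. Specifically, if 2a+b=0 then X_3 is central, and if a+2b=0 then Y_1 is central. -/
import Mathlib


/-- Structure constants (listed direction) of the 6-dimensional Lie algebra
`d_5^{a,b}`; basis `X_0 ↦ 0, …, X_3 ↦ 3, Y_1 ↦ 4, V ↦ 5` and brackets
`[X_0,X_1]=X_2`, `[X_0,X_2]=X_3`, `[X_1,X_2]=Y_1`, `[V,X_0]=aX_0`,
`[V,X_1]=bX_1`, `[V,X_2]=(a+b)X_2`, `[V,X_3]=(2a+b)X_3`, `[V,Y_1]=(a+2b)Y_1`. -/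
noncomputable def strAB (a b : ℂ) (i j s : ℕ) : ℂ :=
  (if i = 0 ∧ (j = 1 ∨ j = 2) ∧ s = j + 1 then 1 else 0) +
  (if i = 1 ∧ j = 2 ∧ s = 4 then 1 else 0) +
  (if i = 5 ∧ j = 0 ∧ s = 0 then a else 0) +
  (if i = 5 ∧ j = 1 ∧ s = 1 then b else 0) +
  (if i = 5 ∧ j = 2 ∧ s = 2 then a + b else 0) +
  (if i = 5 ∧ j = 3 ∧ s = 3 then 2 * a + b else 0) +
  (if i = 5 ∧ j = 4 ∧ s = 4 then a + 2 * b else 0)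

/-- Antisymmetrized structure constants of `d_5^{a,b}`. -/
noncomputable def CAB (a b : ℂ) (i j s : ℕ) : ℂ := strAB a b i j s - strAB a b j i s

/-- The bracket of `d_5^{a,b}` on `ℂ^6`. -/
noncomputable def braAB (a b : ℂ) (u v : Fin 6 → ℂ) : Fin 6 → ℂ := fun s =>
  ∑ i : Fin 6, ∑ j : Fin 6, u i * v j * CAB a b i.1 j.1 s.1

/-- The `k`-th basis vector of `ℂ^6`. -/
noncomputable def e (k : Fin 6) : Fin 6 → ℂ := Pi.single k 1

lemma bra_e3 (a b : ℂ) (h : 2*a+b = 0) (u : Fin 6 → ℂ) : braAB a b (e 3) u = 0 := by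
  have c3 : ((3:Fin 6):ℕ) = 3 := rfl
  have c4 : ((4:Fin 6):ℕ) = 4 := rfl
  have c5 : ((5:Fin 6):ℕ) = 5 := rfl
  funext s
  fin_cases s <;>
    simp [braAB, Fin.sum_univ_six, CAB, strAB, e, Pi.single_apply, c3, c4, c5] <;>
    exact Or.inr h

lemma bra_e4 (a b : ℂ) (h : a+2*b = 0) (u : Fin 6 → ℂ) : braAB a b (e 4) u = 0 := by
  have c3 : ((3:Fin 6):ℕ) = 3 := rfl
  have c4 : ((4:Fin 6):ℕ) = 4 := rfl
  have c5 : ((5:Fin 6):ℕ) = 5 := rfl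
  funext s
  fin_cases s <;>
    simp [braAB, Fin.sum_univ_six, CAB, strAB, e, Pi.single_apply, c3, c4, c5] <;>
    exact Or.inr h

/-- For `a, b ∈ ℂ` not both zero, `d_5^{a,b}` has nontrivial center iff
`a + 2b = 0` or `2a + b = 0`; if `2a + b = 0` then `X_3` is central, and if
`a + 2b = 0` then `Y_1` is central. -/
theorem center_d5ab (a b : ℂ) (hab : ¬(a = 0 ∧ b = 0)) :
    ((∃ z : Fin 6 → ℂ, z ≠ 0 ∧ ∀ u : Fin 6 → ℂ, braAB a b z u = 0) ↔
      a + 2 * b = 0 ∨ 2 * a + b = 0) ∧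
    (2 * a + b = 0 → ∀ u : Fin 6 → ℂ, braAB a b (e 3) u = 0) ∧
    (a + 2 * b = 0 → ∀ u : Fin 6 → ℂ, braAB a b (e 4) u = 0) := by
  refine ⟨⟨?_, ?_⟩, fun h u => bra_e3 a b h u, fun h u => bra_e4 a b h u⟩
  · rintro ⟨z, hz, hc⟩
    have c3 : ((3:Fin 6):ℕ) = 3 := rfl
    have c4 : ((4:Fin 6):ℕ) = 4 := rfl
    have c5 : ((5:Fin 6):ℕ) = 5 := rfl
    have h02 := congrFun (hc (e 0)) 2
    have h03 := congrFun (hc (e 0)) 3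
    have h00 := congrFun (hc (e 0)) 0
    have h12 := congrFun (hc (e 1)) 2
    have h11 := congrFun (hc (e 1)) 1
    have h53 := congrFun (hc (e 5)) 3
    have h54 := congrFun (hc (e 5)) 4
    simp [braAB, Fin.sum_univ_six, CAB, strAB, e, Pi.single_apply, c3, c4, c5] at h02 h03 h00 h12 h11 h53 h54
    have h5 : z 5 = 0 := by
      rcases h00 with h | h
      · exact h
      · rcases h11 with h' | h'
        · exact h'
        · exact absurd ⟨h, h'⟩ hab
    rcases h53 with h3 | h3
    · rcases h54 with h4 | h4
      · exfalso
        apply hz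
        funext i
        fin_cases i <;> assumption
      · exact Or.inl h4
    · exact Or.inr h3
  · rintro (h | h)
    · exact ⟨e 4, fun h0 => by simpa [e] using congrFun h0 4, bra_e4 a b h⟩
    · exact ⟨e 3, fun h0 => by simpa [e] using congrFun h0 3, bra_e3 a b h⟩
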